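/- If the initial estimation error covariance satisfies P̃'₀⁻ ⪯ P̃₀⁻, then the Kalman filter recursion (prior update P̃k⁻ = A P̃_{k−1} A^T + G G^T, posterior update P̃k = P̃k⁻ − P̃k⁻ C^T (C P̃k⁻ C^T + D D^T)⁻¹ C P̃k⁻) preserves the ordering: P̃'ₖ⁻ ⪯ P̃ₖ⁻ and P̃'ₖ ⪯ P̃ₖ for all k = 0, …, N. -/

import Mathlib

/-!
For any gain `K`, the Joseph-form covariance `(1 - K C) P (1 - K C)ᵀ + K R Kᵀ` is positive
semidefinite, depends monotonically on `P`, and exceeds the Kalman posterior covariance by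
`(K - K*) S (K - K*)ᵀ`, where `K*` is the Kalman gain and `S = C P Cᵀ + R`. So the posterior is the
minimum of the Joseph form over all gains. Evaluating both Joseph forms at the gain of the larger
covariance `P` gives `post P - post P' = (1 - K C) (P - P') (1 - K C)ᵀ + (K - K') S' (K - K')ᵀ ⪰ 0`.
The prior update `P ↦ A P Aᵀ + G Gᵀ` is monotone as well, and the theorem follows by induction.
-/

open Matrix

namespace Matrix

variable {m n : Type*}

lemma PosSemidef.isSymm {P : Matrix n n ℝ} (hP : P.PosSemidef) : P.IsSymm :=
  isHermitian_iff_isSymm.mp hP.isHermitian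

variable [Fintype m] [Fintype n]

lemma PosSemidef.mul_mul_transpose_same {P : Matrix n n ℝ} (hP : P.PosSemidef)
    (B : Matrix m n ℝ) : (B * P * Bᵀ).PosSemidef := by
  simpa only [conjTranspose_eq_transpose_of_trivial] using hP.mul_mul_conjTranspose_same B

lemma PosSemidef.mul_mul_transpose_add_posDef {P : Matrix n n ℝ} (hP : P.PosSemidef)
    (B : Matrix m n ℝ) {R : Matrix m m ℝ} (hR : R.PosDef) : (B * P * Bᵀ + R).PosDef :=
  PosDef.posSemidef_add (hP.mul_mul_transpose_same B) hR

lemma posSemidef_self_mul_transpose (B : Matrix m n ℝ) : (B * Bᵀ).PosSemidef := by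
  simpa only [conjTranspose_eq_transpose_of_trivial] using posSemidef_self_mul_conjTranspose B

end Matrix

section Kalman

variable {m n : Type*} [Fintype m] [Fintype n] [DecidableEq n]

def josephCov (C : Matrix m n ℝ) (R : Matrix m m ℝ) (P : Matrix n n ℝ) (K : Matrix n m ℝ) :
    Matrix n n ℝ :=
  (1 - K * C) * P * (1 - K * C)ᵀ + K * R * Kᵀ

variable {C : Matrix m n ℝ} {R : Matrix m m ℝ}

lemma josephCov_posSemidef {P : Matrix n n ℝ} (hP : P.PosSemidef) (hR : R.PosSemidef)
    (K : Matrix n m ℝ) : (josephCov C R P K).PosSemidef :=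
  (hP.mul_mul_transpose_same _).add (hR.mul_mul_transpose_same K)

lemma josephCov_sub_josephCov (P P' : Matrix n n ℝ) (K : Matrix n m ℝ) :
    josephCov C R P K - josephCov C R P' K = (1 - K * C) * (P - P') * (1 - K * C)ᵀ := by
  rw [josephCov, josephCov, add_sub_add_right_eq_sub, ← Matrix.sub_mul, ← Matrix.mul_sub]

variable [DecidableEq m]

noncomputable def kalmanGain (C : Matrix m n ℝ) (R : Matrix m m ℝ) (P : Matrix n n ℝ) :
    Matrix n m ℝ :=
  P * Cᵀ * (C * P * Cᵀ + R)⁻¹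

noncomputable def kalmanPosterior (C : Matrix m n ℝ) (R : Matrix m m ℝ) (P : Matrix n n ℝ) :
    Matrix n n ℝ :=
  P - P * Cᵀ * (C * P * Cᵀ + R)⁻¹ * C * P

lemma josephCov_eq_kalmanPosterior_add {P : Matrix n n ℝ} (hP : P.IsSymm) (hR : R.IsSymm)
    (hS : IsUnit (C * P * Cᵀ + R)) (K : Matrix n m ℝ) :
    josephCov C R P K = kalmanPosterior C R P +
      (K - kalmanGain C R P) * (C * P * Cᵀ + R) * (K - kalmanGain C R P)ᵀ := by
  set S := C * P * Cᵀ + R with hS_def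
  have hS_det : IsUnit S.det := (isUnit_iff_isUnit_det S).mp hS
  set L := kalmanGain C R P
  have hS_symm : S.IsSymm := by
    simp only [hS_def, IsSymm, transpose_add, transpose_mul, transpose_transpose, hP.eq, hR.eq,
      Matrix.mul_assoc]
  have hLt : Lᵀ = S⁻¹ * (C * P) := by
    rw [show L = P * Cᵀ * S⁻¹ from rfl, transpose_mul, transpose_nonsing_inv, hS_symm.eq,
      transpose_mul, hP.eq, transpose_transpose]
  have hLS : L * S = P * Cᵀ := nonsing_inv_mul_cancel_right S _ hS_det
  have hSL : S * Lᵀ = C * P := by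
    rw [hLt, ← Matrix.mul_assoc, mul_nonsing_inv S hS_det, Matrix.one_mul]
  calc josephCov C R P K = P - K * C * P - P * Cᵀ * Kᵀ + K * S * Kᵀ := by
        simp only [josephCov, hS_def, transpose_sub, transpose_mul, transpose_one,
          Matrix.mul_sub, Matrix.sub_mul, Matrix.mul_add, Matrix.add_mul, Matrix.mul_one,
          Matrix.one_mul, Matrix.mul_assoc]
        abel
    _ = (P - L * C * P) + (K * S * Kᵀ - K * (S * Lᵀ) - L * S * Kᵀ + L * (S * Lᵀ)) := by
        rw [hSL, hLS]
        simp only [Matrix.mul_assoc]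
        abel
    _ = _ := by
        rw [transpose_sub, show kalmanPosterior C R P = P - L * C * P from rfl]
        simp only [Matrix.sub_mul, Matrix.mul_sub, Matrix.mul_assoc]
        abel

lemma josephCov_kalmanGain {P : Matrix n n ℝ} (hP : P.IsSymm) (hR : R.IsSymm)
    (hS : IsUnit (C * P * Cᵀ + R)) :
    josephCov C R P (kalmanGain C R P) = kalmanPosterior C R P := by
  rw [josephCov_eq_kalmanPosterior_add hP hR hS, sub_self, Matrix.zero_mul, Matrix.zero_mul,
    add_zero]

lemma kalmanPosterior_posSemidef {P : Matrix n n ℝ} (hP : P.PosSemidef) (hR : R.PosDef) :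
    (kalmanPosterior C R P).PosSemidef := by
  rw [← josephCov_kalmanGain hP.isSymm hR.posSemidef.isSymm
    (hP.mul_mul_transpose_add_posDef C hR).isUnit]
  exact josephCov_posSemidef hP hR.posSemidef _

lemma kalmanPosterior_sub_posSemidef {P P' : Matrix n n ℝ} (hP' : P'.PosSemidef)
    (hle : (P - P').PosSemidef) (hR : R.PosDef) :
    (kalmanPosterior C R P - kalmanPosterior C R P').PosSemidef := by
  have hP : P.PosSemidef := sub_add_cancel P P' ▸ hle.add hP'
  have hS : (C * P * Cᵀ + R).PosDef := hP.mul_mul_transpose_add_posDef C hR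
  have hS' : (C * P' * Cᵀ + R).PosDef := hP'.mul_mul_transpose_add_posDef C hR
  set K := kalmanGain C R P
  set K' := kalmanGain C R P'
  have hdiff : kalmanPosterior C R P - kalmanPosterior C R P' =
      (1 - K * C) * (P - P') * (1 - K * C)ᵀ + (K - K') * (C * P' * Cᵀ + R) * (K - K')ᵀ := by
    rw [← josephCov_kalmanGain hP.isSymm hR.posSemidef.isSymm hS.isUnit,
      ← josephCov_sub_josephCov P P' K, josephCov_eq_kalmanPosterior_add hP'.isSymm
      hR.posSemidef.isSymm hS'.isUnit K]
    abel
  rw [hdiff]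
  exact (hle.mul_mul_transpose_same _).add (hS'.posSemidef.mul_mul_transpose_same _)

end Kalman

theorem kalman_recursion_monotone_general {n m : ℕ} (N : ℕ)
    (A G : Matrix (Fin n) (Fin n) ℝ)
    (C : Matrix (Fin m) (Fin n) ℝ) (D : Matrix (Fin m) (Fin m) ℝ)
    (hD : (D * Dᵀ).PosDef)
    (Pp Pp' Po Po' : ℕ → Matrix (Fin n) (Fin n) ℝ)
    (h0' : (Pp' 0).PosSemidef)
    (hinit : (Pp 0 - Pp' 0).PosSemidef)
    (hpost : ∀ k, Po k =
      Pp k - Pp k * Cᵀ * (C * Pp k * Cᵀ + D * Dᵀ)⁻¹ * C * Pp k)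
    (hpost' : ∀ k, Po' k =
      Pp' k - Pp' k * Cᵀ * (C * Pp' k * Cᵀ + D * Dᵀ)⁻¹ * C * Pp' k)
    (hprior : ∀ k, Pp (k + 1) = A * Po k * Aᵀ + G * Gᵀ)
    (hprior' : ∀ k, Pp' (k + 1) = A * Po' k * Aᵀ + G * Gᵀ) :
    ∀ k ≤ N, (Pp k - Pp' k).PosSemidef ∧ (Po k - Po' k).PosSemidef := by
  have posterior_sub : ∀ k, (Pp' k).PosSemidef → (Pp k - Pp' k).PosSemidef →
      (Po k - Po' k).PosSemidef := fun k hP' hle => by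
    rw [hpost, hpost']
    exact kalmanPosterior_sub_posSemidef hP' hle hD
  have invariant : ∀ k, (Pp' k).PosSemidef ∧ (Pp k - Pp' k).PosSemidef := by
    intro k
    induction k with
    | zero => exact ⟨h0', hinit⟩
    | succ k ih =>
      obtain ⟨hP', hle⟩ := ih
      constructor
      · rw [hprior', hpost']
        exact ((kalmanPosterior_posSemidef hP' hD).mul_mul_transpose_same A).add
          (posSemidef_self_mul_transpose G)
      · rw [hprior, hprior', add_sub_add_right_eq_sub, ← Matrix.sub_mul, ← Matrix.mul_sub]
        exact (posterior_sub k hP' hle).mul_mul_transpose_same A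
  exact fun k _ => ⟨(invariant k).2, posterior_sub k (invariant k).1 (invariant k).2⟩

/-- The Kalman filter covariance recursion preserves the Loewner order
of initial error covariances, at every step `k ≤ N`, both for prior and
posterior covariances. -/
theorem kalman_recursion_monotone {n m : ℕ} (N : ℕ)
    (A G : Matrix (Fin n) (Fin n) ℝ)
    (C : Matrix (Fin m) (Fin n) ℝ) (D : Matrix (Fin m) (Fin m) ℝ)
    (hD : (D * Dᵀ).PosDef)
    (Pp Pp' Po Po' : ℕ → Matrix (Fin n) (Fin n) ℝ)
    (h0 : (Pp 0).PosSemidef) (h0' : (Pp' 0).PosSemidef)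
    (hinit : (Pp 0 - Pp' 0).PosSemidef)
    (hpost : ∀ k, Po k =
      Pp k - Pp k * Cᵀ * (C * Pp k * Cᵀ + D * Dᵀ)⁻¹ * C * Pp k)
    (hpost' : ∀ k, Po' k =
      Pp' k - Pp' k * Cᵀ * (C * Pp' k * Cᵀ + D * Dᵀ)⁻¹ * C * Pp' k)
    (hprior : ∀ k, Pp (k + 1) = A * Po k * Aᵀ + G * Gᵀ)
    (hprior' : ∀ k, Pp' (k + 1) = A * Po' k * Aᵀ + G * Gᵀ) :
    ∀ k ≤ N, (Pp k - Pp' k).PosSemidef ∧ (Po k - Po' k).PosSemidef :=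
  kalman_recursion_monotone_general N A G C D hD Pp Pp' Po Po' h0' hinit hpost hpost' hprior hprior'
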